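/- arXiv:1109.4094 — 6 statements merged into one kernel-verified Lean document; each statement's English description precedes it below -/
import Mathlib

section
/- Let S ⊆ ℤ/kℤ and define V_S to be the set of words w₀w₁⋯w_{k-1} on the symmetric alphabet of 2d letters such that w_s = w_{s+1}⁻¹ for every s ∈ S (indices mod k). Then |V_S| = (2d)^{k-|S|} if |S| < k; |V_S| = 2d if |S| = k and k is even; and |V_S| = 0 if |S| = k and k is odd. -/
private def nflip {d : ℕ} (x : Fin d × Bool) : Fin d × Bool := (x.1, !x.2)

private lemma nflip_iter {d : ℕ} (m : ℕ) (x : Fin d × Bool) :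
    nflip^[m] x = (x.1, xor (decide (m % 2 = 1)) x.2) := by
  induction m generalizing x with
  | zero => simp [nflip]
  | succ n ih =>
    rw [Function.iterate_succ_apply', ih]
    rcases Nat.even_or_odd n with h | h
    · have h0 : n % 2 = 0 := Nat.even_iff.mp h
      have h1 : (n+1) % 2 = 1 := by omega
      simp [nflip, h0, h1]
    · have h0 : n % 2 = 1 := Nat.odd_iff.mp h
      have h1 : (n+1) % 2 = 0 := by omega
      simp [nflip, h0, h1]

private lemma propagate {d k : ℕ} (S : Finset (ZMod k)) (w : ZMod k → Fin d × Bool)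
    (hw : ∀ s ∈ S, w s = nflip (w (s + 1))) :
    ∀ (m : ℕ) (s : ZMod k), (∀ j < m, s + (j : ZMod k) ∈ S) →
      w s = nflip^[m] (w (s + (m : ZMod k))) := by
  intro m
  induction m with
  | zero => intro s _; simp
  | succ n ih =>
    intro s hs
    have h0 : s ∈ S := by simpa using hs 0 (Nat.succ_pos n)
    have h1 : ∀ j < n, (s + 1) + (j : ZMod k) ∈ S := by
      intro j hj
      have e : (s + 1) + (j : ZMod k) = s + ((j + 1 : ℕ) : ZMod k) := by push_cast; ring
      rw [e]
      exact hs (j + 1) (by omega)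
    rw [hw s h0, ih (s + 1) h1, Function.iterate_succ_apply']
    congr 2
    push_cast
    ring

/-- For `S ⊆ ℤ/kℤ`, let `V_S` be the set of words `w : ℤ/kℤ → Fin d × Bool`
on the symmetric alphabet of `2d` letters (the inverse of a letter flips the Boolean)
such that `w s = (w (s+1))⁻¹` for every `s ∈ S`. Then `|V_S| = (2d)^(k - |S|)` if
`|S| < k`, `|V_S| = 2d` if `|S| = k` and `k` is even, and `|V_S| = 0` if `|S| = k`
and `k` is odd. -/
theorem card_V_S (d k : ℕ) (hd : 1 ≤ d) (hk : 1 ≤ k) (S : Finset (ZMod k)) :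
    Nat.card {w : ZMod k → Fin d × Bool //
        ∀ s ∈ S, w s = ((w (s + 1)).1, !(w (s + 1)).2)}
      = if S.card < k then (2 * d) ^ (k - S.card)
        else if Even k then 2 * d else 0 := by
  haveI : NeZero k := ⟨by omega⟩
  have hcardZ : Fintype.card (ZMod k) = k := ZMod.card k
  by_cases hS : S.card < k
  · rw [if_pos hS]
    have ht : ∃ t : ZMod k, t ∉ S := by
      by_contra h
      push_neg at h
      have hsub : Finset.univ ⊆ S := fun x _ => h x
      have := Finset.card_le_card hsub
      rw [Finset.card_univ, hcardZ] at this
      omega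
    have hex : ∀ s : ZMod k, ∃ m : ℕ, s + (m : ZMod k) ∉ S := by
      intro s
      obtain ⟨t, htS⟩ := ht
      refine ⟨(t - s).val, ?_⟩
      have : s + (((t - s).val : ℕ) : ZMod k) = t := by
        rw [ZMod.natCast_val, ZMod.cast_id]; ring
      rwa [this]
    set n : ZMod k → ℕ := fun s => Nat.find (hex s) with hn
    have hnspec : ∀ s, s + ((n s : ℕ) : ZMod k) ∉ S := fun s => Nat.find_spec (hex s)
    have hnmin : ∀ s, ∀ j < n s, s + (j : ZMod k) ∈ S := by
      intro s j hj
      by_contra h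
      exact absurd (Nat.find_min (hex s) hj) (by simpa using h)
    have hnsucc : ∀ s ∈ S, n s = n (s + 1) + 1 := by
      intro s hsS
      have h0 : n s ≠ 0 := by
        intro h
        apply hnspec s
        rw [h]
        simpa using hsS
      obtain ⟨m, hm⟩ := Nat.exists_eq_succ_of_ne_zero h0
      have hle : n (s + 1) ≤ m := by
        apply Nat.find_le
        have h2 := hnspec s
        rw [hm] at h2
        have e : (s + 1) + (m : ZMod k) = s + ((m.succ : ℕ) : ZMod k) := by push_cast; ring
        rw [e]
        exact h2
      have hge : m ≤ n (s + 1) := by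
        by_contra h
        push_neg at h
        have hspec := hnspec (s + 1)
        have e : (s + 1) + ((n (s+1) : ℕ) : ZMod k) = s + ((n (s+1) + 1 : ℕ) : ZMod k) := by
          push_cast; ring
        rw [e] at hspec
        exact hspec (hnmin s (n (s+1) + 1) (by omega))
      omega
    have e : {w : ZMod k → Fin d × Bool //
        ∀ s ∈ S, w s = ((w (s + 1)).1, !(w (s + 1)).2)} ≃
        ({t : ZMod k // t ∉ S} → Fin d × Bool) := by
      refine ⟨fun w t => w.1 t.1, fun f => ⟨fun s => nflip^[n s] (f ⟨s + n s, hnspec s⟩), ?_⟩,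
        ?_, ?_⟩
      · intro s hsS
        show nflip^[n s] (f ⟨s + ((n s : ℕ) : ZMod k), hnspec s⟩) =
          nflip (nflip^[n (s+1)] (f ⟨(s + 1) + ((n (s+1) : ℕ) : ZMod k), hnspec (s+1)⟩))
        have hpt : (⟨s + ((n s : ℕ) : ZMod k), hnspec s⟩ : {t : ZMod k // t ∉ S}) =
            ⟨(s + 1) + ((n (s+1) : ℕ) : ZMod k), hnspec (s+1)⟩ := by
          apply Subtype.ext
          show s + ((n s : ℕ) : ZMod k) = _
          rw [hnsucc s hsS]
          push_cast; ring
        rw [hpt, hnsucc s hsS, Function.iterate_succ_apply']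
      · rintro ⟨w, hw⟩
        apply Subtype.ext
        funext s
        exact (propagate S w hw (n s) s (hnmin s)).symm
      · intro f
        funext t
        have h0 : n t.1 = 0 := by
          rw [hn]
          rw [Nat.find_eq_zero]
          simpa using t.2
        show nflip^[n t.1] (f ⟨t.1 + ((n t.1 : ℕ) : ZMod k), hnspec t.1⟩) = f t
        have hpt2 : (⟨t.1 + ((n t.1 : ℕ) : ZMod k), hnspec t.1⟩ : {t : ZMod k // t ∉ S}) = t := by
          apply Subtype.ext
          show t.1 + ((n t.1 : ℕ) : ZMod k) = t.1
          rw [h0]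
          simp
        rw [hpt2, h0]
        simp
    rw [Nat.card_congr e, Nat.card_eq_fintype_card, Fintype.card_fun]
    have h1 : Fintype.card (Fin d × Bool) = 2 * d := by simp [mul_comm]
    have h2 : Fintype.card {t : ZMod k // t ∉ S} = k - S.card := by
      rw [Fintype.card_subtype_compl, hcardZ, Fintype.card_coe]
    rw [h1, h2]
  · rw [if_neg hS]
    have hSk : S.card = k := by
      have := S.card_le_univ
      rw [hcardZ] at this
      omega
    have hSu : S = Finset.univ := Finset.eq_univ_of_card S (by rw [hSk, hcardZ])
    have hall : ∀ (w : {w : ZMod k → Fin d × Bool //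
        ∀ s ∈ S, w s = ((w (s + 1)).1, !(w (s + 1)).2)}) (s : ZMod k) (m : ℕ),
        w.1 s = nflip^[m] (w.1 (s + (m : ZMod k))) := by
      intro w s m
      exact propagate S w.1 w.2 m s (fun j _ => hSu ▸ Finset.mem_univ _)
    by_cases hke : Even k
    · rw [if_pos hke]
      have hk2 : k % 2 = 0 := Nat.even_iff.mp hke
      have e : {w : ZMod k → Fin d × Bool //
          ∀ s ∈ S, w s = ((w (s + 1)).1, !(w (s + 1)).2)} ≃ Fin d × Bool := by
        refine ⟨fun w => w.1 0, fun v => ⟨fun s => nflip^[(-s).val] v, ?_⟩, ?_, ?_⟩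
        · intro s _
          show nflip^[(-s).val] v = nflip ((nflip^[(-(s+1)).val] v))
          rw [show nflip (nflip^[(-(s+1)).val] v) = nflip^[(-(s+1)).val + 1] v from
            (Function.iterate_succ_apply' nflip _ v).symm]
          rw [nflip_iter, nflip_iter]
          have hb : (-(s+1)).val = ((-s).val + (k - 1)) % k := by
            have h1 : -(s+1) = (-s) + ((k-1 : ℕ) : ZMod k) := by
              have : ((k-1 : ℕ) : ZMod k) = (k : ZMod k) - 1 := by push_cast [Nat.cast_sub hk]; ring
              rw [this, ZMod.natCast_self]
              ring
            rw [h1, ZMod.val_add, ZMod.val_cast_of_lt (by omega)]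
          have ha : (-s).val < k := ZMod.val_lt _
          have key : ((-s).val % 2) + ((-(s+1)).val % 2) = 1 := by
            rcases Nat.eq_zero_or_pos (-s).val with h | h
            · rw [hb, h, Nat.mod_eq_of_lt (show 0 + (k-1) < k by omega)]
              omega
            · have h5 : ((-s).val + (k - 1)) = ((-s).val - 1) + k := by omega
              rw [hb, h5, Nat.add_mod_right,
                Nat.mod_eq_of_lt (show (-s).val - 1 < k by omega)]
              omega
          have hpar : (-s).val % 2 = ((-(s+1)).val + 1) % 2 := by omega
          rw [hpar]
        · rintro ⟨w, hw⟩
          apply Subtype.ext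
          funext s
          show nflip^[(-s).val] (w 0) = w s
          have h1 : w 0 = nflip^[s.val] (w s) := by
            have := hall ⟨w, hw⟩ 0 s.val
            rwa [zero_add, ZMod.natCast_val, ZMod.cast_id] at this
          rw [h1, ← Function.iterate_add_apply]
          have hsum : ((-s).val + s.val) % 2 = 0 := by
            have hz : (((-s).val + s.val) % k) = 0 := by
              have h2 := ZMod.val_add (-s) s
              rw [neg_add_cancel, ZMod.val_zero] at h2
              omega
            obtain ⟨c, hc⟩ := Nat.dvd_of_mod_eq_zero hz
            have hlt1 : (-s).val < k := ZMod.val_lt _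
            have hlt2 : s.val < k := ZMod.val_lt _
            have h4 : k * c < k * 2 := by rw [← hc]; omega
            have h3 : c < 2 := Nat.lt_of_mul_lt_mul_left h4
            interval_cases c <;> omega
          rw [nflip_iter]
          simp [hsum]
        · intro v
          show nflip^[(-(0 : ZMod k)).val] v = v
          rw [neg_zero, ZMod.val_zero]
          simp
      rw [Nat.card_congr e, Nat.card_eq_fintype_card]
      simp [mul_comm]
    · rw [if_neg hke]
      have hk2 : k % 2 = 1 := Nat.odd_iff.mp (Nat.not_even_iff_odd.mp hke)
      haveI : IsEmpty {w : ZMod k → Fin d × Bool //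
          ∀ s ∈ S, w s = ((w (s + 1)).1, !(w (s + 1)).2)} := by
        constructor
        intro w
        have h1 := hall w 0 k
        rw [ZMod.natCast_self, add_zero, nflip_iter, hk2] at h1
        have h2 := congrArg Prod.snd h1
        simp at h2
      simp [Nat.card_eq_zero]
end

section
/- For every real u ≥ 0, (1+u)·log(1+u) − u ≥ (u²/2)/(1 + u/3). -/
/-!
The gap `g u` between Bennett's function `(1 + u) log (1 + u) - u` and Bernstein's
`(u² / 2) / (1 + u / 3)` vanishes at `0` and has derivative
`log (1 + u) - 3u(u + 6) / (2(u + 3)²)`. This is nonnegative for `u ≥ 0` because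
`log (1 + u) ≥ 2u / (u + 2)`, and `2u / (u + 2)` exceeds the rational term by
`u³ / (2(u + 2)(u + 3)²)`. Hence `g` is monotone on `[0, ∞)` and so nonnegative there.
-/

open Real Set

noncomputable def bennettBernsteinGap (u : ℝ) : ℝ :=
  (1 + u) * log (1 + u) - u - u ^ 2 / 2 / (1 + u / 3)

lemma hasDerivAt_bennettBernsteinGap {x : ℝ} (hx : -1 < x) :
    HasDerivAt bennettBernsteinGap (log (1 + x) - 3 * x * (x + 6) / (2 * (x + 3) ^ 2)) x := by
  have h₁ : 1 + x ≠ 0 := by linarith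
  have h₃ : 1 + x / 3 ≠ 0 := by linarith
  have hlin : HasDerivAt (fun y : ℝ => 1 + y) 1 x := (hasDerivAt_id x).const_add 1
  have hlog : HasDerivAt (fun y : ℝ => log (1 + y)) (1 + x)⁻¹ x := by
    simpa using hlin.log h₁
  have hnum : HasDerivAt (fun y : ℝ => y ^ 2 / 2) x x := by
    simpa using (hasDerivAt_pow 2 x).div_const 2
  have hden : HasDerivAt (fun y : ℝ => 1 + y / 3) (1 / 3) x := by
    simpa using ((hasDerivAt_id x).div_const 3).const_add 1
  refine (((hlin.mul hlog).sub (hasDerivAt_id' x)).sub (hnum.div hden h₃)).congr_deriv ?_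
  have h₃' : x + 3 ≠ 0 := by linarith
  rw [show 1 + x / 3 = (x + 3) / 3 by ring]
  field_simp
  ring

lemma log_one_add_sub_div_nonneg {x : ℝ} (hx : 0 ≤ x) :
    0 ≤ log (1 + x) - 3 * x * (x + 6) / (2 * (x + 3) ^ 2) := by
  have hrat : 3 * x * (x + 6) / (2 * (x + 3) ^ 2) ≤ 2 * x / (x + 2) := by
    rw [div_le_div_iff₀ (by positivity) (by positivity)]
    nlinarith [pow_nonneg hx 3]
  linarith [le_log_one_add_of_nonneg hx]

lemma monotoneOn_bennettBernsteinGap : MonotoneOn bennettBernsteinGap (Ici 0) := by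
  have hderiv : ∀ x ∈ Ici (0 : ℝ), HasDerivAt bennettBernsteinGap
      (log (1 + x) - 3 * x * (x + 6) / (2 * (x + 3) ^ 2)) x :=
    fun x hx => hasDerivAt_bennettBernsteinGap (by linarith [mem_Ici.mp hx])
  exact monotoneOn_of_hasDerivWithinAt_nonneg (convex_Ici 0)
    (fun x hx => (hderiv x hx).continuousAt.continuousWithinAt)
    (fun x hx => (hderiv x (interior_subset hx)).hasDerivWithinAt)
    (fun x hx => log_one_add_sub_div_nonneg (interior_subset hx))

/-- For every real `u ≥ 0`,
`(1+u)·log(1+u) − u ≥ (u²/2)/(1 + u/3)`. -/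
theorem freedman_calculus_lemma (u : ℝ) (hu : 0 ≤ u) :
    (1 + u) * Real.log (1 + u) - u ≥ (u ^ 2 / 2) / (1 + u / 3) := by
  have h := monotoneOn_bennettBernsteinGap self_mem_Ici hu hu
  norm_num [bennettBernsteinGap] at h
  linarith
end

section
/- Let π₁,...,π_d be independent uniformly random permutations of {1,...,n} and A, B ⊆ {1,...,n}. Define e(A,B) = ∑_{i=1}^d |{x ∈ A : π_i(x) ∈ B}| and μ = |A||B|d/n. Then for any real k ≥ e, P[e(A,B) ≥ kμ] ≤ exp(−k(log k − 2)μ). -/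
/-!
If `e(A,B) ≥ kμ`, then some set `S` of `m = ⌈kμ⌉` pairs `(i, x) ∈ [d] × A` satisfies
`π i x ∈ B` for all its pairs. For a fixed `S` with fibres `T i` over `i`, the permutations
are independent and `#{σ | σ '' T ⊆ B} = (|B|)_t (n - t)! ≤ (|B| / n) ^ t n!`, so the
probability is at most `(|B| / n) ^ m`. A union bound over the `C(d|A|, m)` choices of `S`,
with `C(N, m) ≤ N ^ m / m! ≤ (e N / m) ^ m`, gives `(e μ / m) ^ m ≤ (e / k) ^ (k μ)`, which is
`exp (-k (log k - 1) μ)`.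
-/

open Finset
open scoped Nat

theorem card_filter_injective_forall_mem {α β : Type*} [Fintype α] [Fintype β] [DecidableEq α]
    [DecidableEq β] (C : Finset β) :
    #{g : α → β | Function.Injective g ∧ ∀ x, g x ∈ C} = (#C).descFactorial (Fintype.card α) := by
  rw [← Fintype.card_subtype, ← Fintype.card_coe C, ← Fintype.card_embedding_eq]
  exact Fintype.card_congr
    { toFun := fun g => ⟨fun x => ⟨g.1 x, g.2.2 x⟩, fun a b h => g.2.1 (Subtype.ext_iff.mp h)⟩
      invFun := fun f => ⟨fun x => f x, fun a b h => f.injective (Subtype.ext h), fun x => (f x).2⟩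
      left_inv := fun _ => rfl
      right_inv := fun _ => rfl }

theorem sum_card_filter_prod_mem {ι α : Type*} [Fintype ι] [Fintype α] [DecidableEq ι]
    [DecidableEq α] (S : Finset (ι × α)) : ∑ i, #{x | (i, x) ∈ S} = #S := by
  conv_rhs => rw [← filter_univ_mem S, card_filter, ← univ_product_univ, sum_product]
  simp only [card_filter]

theorem Nat.descFactorial_mul_pow_le_pow_mul_descFactorial {b n : ℕ} (h : b ≤ n) :
    ∀ t : ℕ, b.descFactorial t * n ^ t ≤ b ^ t * n.descFactorial t
  | 0 => by simp
  | t + 1 => by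
    have hstep : (b - t) * n ≤ b * (n - t) := by
      rw [Nat.sub_mul, Nat.mul_sub]
      exact Nat.sub_le_sub_left (by rw [mul_comm]; exact Nat.mul_le_mul_left t h) _
    calc b.descFactorial (t + 1) * n ^ (t + 1)
        = ((b - t) * n) * (b.descFactorial t * n ^ t) := by
          rw [Nat.descFactorial_succ, pow_succ]; ring
      _ ≤ (b * (n - t)) * (b ^ t * n.descFactorial t) :=
          Nat.mul_le_mul hstep (descFactorial_mul_pow_le_pow_mul_descFactorial h t)
      _ = b ^ (t + 1) * n.descFactorial (t + 1) := by
          rw [Nat.descFactorial_succ, pow_succ]; ring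

namespace Equiv.Perm

variable {α : Type*} [Fintype α] [DecidableEq α]

theorem card_filter_eqOn_le (σ₀ : Perm α) (T : Finset α) :
    #{σ : Perm α | ∀ x ∈ T, σ x = σ₀ x} ≤ (Fintype.card α - #T)! := by
  -- such `σ` are determined by their values off `T`, which avoid `σ₀ '' T`
  calc #{σ : Perm α | ∀ x ∈ T, σ x = σ₀ x}
      ≤ #{g : ↥Tᶜ → α | Function.Injective g ∧ ∀ x, g x ∈ (T.image σ₀)ᶜ} := by
        refine card_le_card_of_injOn (fun σ x => σ x) (fun σ hσ => ?_) (fun σ hσ τ hτ hστ => ?_)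
        · simp only [coe_filter, mem_univ, true_and, Set.mem_ofPred_eq] at hσ ⊢
          refine ⟨fun x y h => Subtype.ext (σ.injective h), fun x => ?_⟩
          rw [mem_compl, mem_image]
          rintro ⟨y, hy, hσy⟩
          rw [← hσ y hy, σ.injective.eq_iff] at hσy
          exact mem_compl.mp x.2 (hσy ▸ hy)
        · simp only [coe_filter, mem_univ, true_and, Set.mem_ofPred_eq] at hσ hτ
          ext x
          by_cases hx : x ∈ T
          · rw [hσ x hx, hτ x hx]
          · exact congrFun hστ ⟨x, mem_compl.mpr hx⟩
    _ = (Fintype.card α - #T)! := by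
        rw [card_filter_injective_forall_mem, card_compl, card_image_of_injective _ σ₀.injective,
          Fintype.card_coe, card_compl, Nat.descFactorial_self]

theorem card_filter_mapsTo_le (T B : Finset α) :
    #{σ : Perm α | ∀ x ∈ T, σ x ∈ B} ≤ (Fintype.card α - #T)! * (#B).descFactorial #T := by
  set s := ({σ : Perm α | ∀ x ∈ T, σ x ∈ B} : Finset (Perm α))
  let restrict : Perm α → (T → α) := fun σ x => σ x
  calc #s ≤ (Fintype.card α - #T)! * #(s.image restrict) := by
        refine card_le_mul_card_image s _ fun g hg => ?_
        obtain ⟨σ₀, -, rfl⟩ := mem_image.mp hg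
        refine (card_le_card fun σ hσ => ?_).trans (card_filter_eqOn_le σ₀ T)
        simp only [mem_filter, mem_univ, true_and] at hσ ⊢
        exact fun x hx => congrFun hσ.2 ⟨x, hx⟩
    _ ≤ (Fintype.card α - #T)! * #{g : T → α | Function.Injective g ∧ ∀ x, g x ∈ B} := by
        gcongr
        intro g hg
        obtain ⟨σ, hσ, rfl⟩ := mem_image.mp hg
        simp only [s, mem_filter, mem_univ, true_and] at hσ ⊢
        exact ⟨fun x y h => Subtype.ext (σ.injective h), fun x => hσ x x.2⟩
    _ = (Fintype.card α - #T)! * (#B).descFactorial #T := by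
        rw [card_filter_injective_forall_mem, Fintype.card_coe]

theorem card_filter_mapsTo_le_div_pow_mul_factorial (T B : Finset α) :
    (#{σ : Perm α | ∀ x ∈ T, σ x ∈ B} : ℝ) ≤ (#B / Fintype.card α : ℝ) ^ #T * (Fintype.card α)! := by
  set n := Fintype.card α
  have hTn : #T ≤ n := card_le_univ T
  have hcount : #{σ : Perm α | ∀ x ∈ T, σ x ∈ B} * n ^ #T ≤ #B ^ #T * n ! :=
    calc #{σ : Perm α | ∀ x ∈ T, σ x ∈ B} * n ^ #T
        ≤ (n - #T)! * ((#B).descFactorial #T * n ^ #T) := by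
          rw [← mul_assoc]; gcongr; exact card_filter_mapsTo_le T B
      _ ≤ (n - #T)! * (#B ^ #T * n.descFactorial #T) := by
          exact Nat.mul_le_mul_left _
            (Nat.descFactorial_mul_pow_le_pow_mul_descFactorial (card_le_univ B) _)
      _ = #B ^ #T * n ! := by rw [mul_left_comm, Nat.factorial_mul_descFactorial hTn]
  have hpow : (0 : ℝ) < n ^ #T := by
    rcases (#T).eq_zero_or_pos with hT | hT
    · simp [hT]
    · exact pow_pos (by exact_mod_cast hT.trans_le hTn) _
  rw [div_pow, div_mul_eq_mul_div, le_div_iff₀ hpow]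
  exact_mod_cast hcount

theorem card_pi_filter_mapsTo_le {ι : Type*} [Fintype ι] [DecidableEq ι]
    (S : Finset (ι × α)) (B : Finset α) :
    (#{π : ι → Perm α | ∀ p ∈ S, π p.1 p.2 ∈ B} : ℝ) ≤
      (#B / Fintype.card α : ℝ) ^ #S * (Fintype.card α)! ^ Fintype.card ι := by
  have hpi : ({π : ι → Perm α | ∀ p ∈ S, π p.1 p.2 ∈ B} : Finset _) =
      Fintype.piFinset fun i => {σ : Perm α | ∀ x ∈ ({x | (i, x) ∈ S} : Finset α), σ x ∈ B} := by
    ext π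
    simp [Fintype.mem_piFinset]
  rw [hpi, Fintype.card_piFinset, Nat.cast_prod]
  calc ∏ i, (#{σ : Perm α | ∀ x ∈ ({x | (i, x) ∈ S} : Finset α), σ x ∈ B} : ℝ)
      ≤ ∏ i, ((#B / Fintype.card α : ℝ) ^ #{x | (i, x) ∈ S} * (Fintype.card α)!) :=
        prod_le_prod (fun _ _ => by positivity)
          fun i _ => card_filter_mapsTo_le_div_pow_mul_factorial _ B
    _ = (#B / Fintype.card α : ℝ) ^ #S * (Fintype.card α)! ^ Fintype.card ι := by
        rw [prod_mul_distrib, prod_pow_eq_pow_sum, sum_card_filter_prod_mem, prod_const,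
          card_univ]

end Equiv.Perm

theorem card_le_sum_powersetCard_of_le_card_filter {Ω β : Type*} [Fintype Ω] [DecidableEq Ω]
    [DecidableEq β] {s : Finset Ω} (U : Finset β) (P : Ω → β → Prop)
    [∀ ω, DecidablePred (P ω)] {m : ℕ} (hs : ∀ ω ∈ s, m ≤ #{b ∈ U | P ω b}) :
    #s ≤ ∑ S ∈ U.powersetCard m, #{ω | ∀ b ∈ S, P ω b} := by
  refine (card_le_card fun ω hω => ?_).trans card_biUnion_le
  obtain ⟨S, hSU, hS⟩ := exists_subset_card_eq (hs ω hω)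
  exact mem_biUnion.mpr ⟨S, mem_powersetCard.mpr ⟨hSU.trans (filter_subset _ _), hS⟩,
    mem_filter.mpr ⟨mem_univ ω, fun b hb => (mem_filter.mp (hSU hb)).2⟩⟩

section Tail

open Real

theorem choose_mul_pow_le_exp_one_mul_div_pow (N m : ℕ) {q μ : ℝ} (hq : 0 ≤ q)
    (hNq : N * q ≤ μ) : (N.choose m : ℝ) * q ^ m ≤ (exp 1 * μ / m) ^ m := by
  have hμ : 0 ≤ μ := (by positivity : (0 : ℝ) ≤ N * q).trans hNq
  have hm : (m : ℝ) ^ m / m ! ≤ exp 1 ^ m := by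
    rw [exp_one_pow]
    exact pow_div_factorial_le_exp _ m.cast_nonneg m
  calc (N.choose m : ℝ) * q ^ m ≤ N ^ m / m ! * q ^ m := by
        gcongr; exact Nat.choose_le_pow_div m N
    _ = (N * q) ^ m / m ! := by rw [mul_pow]; ring
    _ ≤ μ ^ m / m ! := by gcongr
    _ = (μ / m) ^ m * (m ^ m / m !) := by
        rcases eq_or_ne m 0 with rfl | hm0
        · simp
        · rw [← mul_div_assoc, ← mul_pow, div_mul_cancel₀ _ (by exact_mod_cast hm0)]
    _ ≤ (μ / m) ^ m * exp 1 ^ m := by gcongr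
    _ = (exp 1 * μ / m) ^ m := by rw [← mul_pow]; ring

theorem choose_mul_pow_ceil_le_exp {N : ℕ} {q μ k : ℝ} (hq : 0 ≤ q) (hNq : N * q ≤ μ)
    (hk : exp 1 ≤ k) :
    (N.choose ⌈k * μ⌉₊ : ℝ) * q ^ ⌈k * μ⌉₊ ≤ exp (-(k * (log k - 1) * μ)) := by
  set m := ⌈k * μ⌉₊
  have hk0 : 0 < k := (exp_pos 1).trans_le hk
  have hμ : 0 ≤ μ := (by positivity : (0 : ℝ) ≤ N * q).trans hNq
  have hek : 0 < exp 1 / k := by positivity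
  have hek1 : exp 1 / k ≤ 1 := (div_le_one hk0).mpr hk
  have hbase : exp 1 * μ / m ≤ exp 1 / k := by
    refine div_le_of_le_mul₀ m.cast_nonneg hek.le ?_
    calc exp 1 * μ = exp 1 / k * (k * μ) := by field_simp
      _ ≤ exp 1 / k * m := by gcongr; exact Nat.le_ceil _
  calc (N.choose m : ℝ) * q ^ m ≤ (exp 1 * μ / m) ^ m :=
        choose_mul_pow_le_exp_one_mul_div_pow N m hq hNq
    _ ≤ (exp 1 / k) ^ m := by gcongr
    _ = (exp 1 / k) ^ (m : ℝ) := (rpow_natCast _ _).symm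
    _ ≤ (exp 1 / k) ^ (k * μ) := rpow_le_rpow_of_exponent_ge hek hek1 (Nat.le_ceil _)
    _ = exp (-(k * (log k - 1) * μ)) := by
        rw [rpow_def_of_pos hek, log_div (exp_ne_zero 1) hk0.ne', log_exp]; ring_nf

end Tail

theorem edge_large_deviation_general (n d : ℕ)
    (A B : Finset (Fin n)) (k : ℝ) (hk : Real.exp 1 ≤ k) :
    ((univ.filter fun π : Fin d → Equiv.Perm (Fin n) =>
        k * (A.card * B.card * d / n) ≤
          (∑ i : Fin d, (A.filter fun x => π i x ∈ B).card : ℝ)).card : ℝ)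
        / ((Nat.factorial n : ℝ) ^ d)
      ≤ Real.exp (-(k * (Real.log k - 2) * (A.card * B.card * d / n))) := by
  set μ : ℝ := A.card * B.card * d / n with hμ
  set m := ⌈k * μ⌉₊
  have hk0 : 0 ≤ k := (Real.exp_pos 1).le.trans hk
  have hpairs : ∀ π ∈ (univ.filter fun π : Fin d → Equiv.Perm (Fin n) =>
      k * μ ≤ (∑ i : Fin d, (A.filter fun x => π i x ∈ B).card : ℝ)),
      m ≤ #{p ∈ (univ : Finset (Fin d)) ×ˢ A | π p.1 p.2 ∈ B} := by
    intro π hπ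
    rw [card_filter, sum_product, Nat.ceil_le]
    simp only [← card_filter]
    exact_mod_cast (mem_filter.mp hπ).2
  have hunion := card_le_sum_powersetCard_of_le_card_filter _
    (fun (π : Fin d → Equiv.Perm (Fin n)) (p : Fin d × Fin n) => π p.1 p.2 ∈ B) hpairs
  rw [div_le_iff₀ (by positivity)]
  calc _ ≤ ∑ S ∈ ((univ : Finset (Fin d)) ×ˢ A).powersetCard m,
        (#B / n : ℝ) ^ m * (n ! : ℝ) ^ d := by
        refine (Nat.cast_le.mpr hunion).trans ?_
        rw [Nat.cast_sum]
        refine sum_le_sum fun S hS => ?_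
        simpa [(mem_powersetCard.mp hS).2] using Equiv.Perm.card_pi_filter_mapsTo_le S B
    _ = ((d * #A).choose m : ℝ) * (#B / n : ℝ) ^ m * (n ! : ℝ) ^ d := by
        rw [sum_const, card_powersetCard, card_product, card_univ, Fintype.card_fin, nsmul_eq_mul,
          mul_assoc]
    _ ≤ Real.exp (-(k * (Real.log k - 1) * μ)) * (n ! : ℝ) ^ d := by
        gcongr
        exact choose_mul_pow_ceil_le_exp (by positivity) (le_of_eq (by rw [hμ]; push_cast; ring)) hk
    _ ≤ Real.exp (-(k * (Real.log k - 2) * μ)) * (n ! : ℝ) ^ d := by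
        gcongr
        linarith

/-- Let `π₁,…,π_d` be independent uniformly random permutations of
`{1,…,n}` (modelled by the uniform distribution on `Fin d → Equiv.Perm (Fin n)`)
and `A, B ⊆ {1,…,n}`. With `e(A,B) = ∑_{i=1}^d |{x ∈ A : π_i x ∈ B}|` and
`μ = |A||B|d/n`, for any real `k ≥ e` we have
`P[e(A,B) ≥ kμ] ≤ exp(−k(log k − 2)μ)`. -/
theorem edge_large_deviation (n d : ℕ) (hn : 1 ≤ n) (hd : 1 ≤ d)
    (A B : Finset (Fin n)) (k : ℝ) (hk : Real.exp 1 ≤ k) :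
    ((univ.filter fun π : Fin d → Equiv.Perm (Fin n) =>
        k * (A.card * B.card * d / n) ≤
          (∑ i : Fin d, (A.filter fun x => π i x ∈ B).card : ℝ)).card : ℝ)
        / ((Nat.factorial n : ℝ) ^ d)
      ≤ Real.exp (-(k * (Real.log k - 2) * (A.card * B.card * d / n))) :=
  edge_large_deviation_general n d A B k hk
end

section
/- Let C_1, C_2, ... be independent Poisson random variables with C_j of mean a(d,j)/(2j), and let N_k = ∑_{j|k} 2j C_j. If α > 0 and a_k = (α+2)·∑_{j|k} a(d,j), then P[N_k > a_k] ≤ 2^{−α(2d−1)^k/(2k)}. -/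
/-!
Chernoff bound. A Poisson variable of mean `r` has moment generating function
`exp (r (eᵗ - 1))`, so for independent `C_j` and `t ≥ 0`,
`P[N_k ≥ a_k] ≤ exp (-t a_k + ∑_{j ∣ k} a(d,j) (e^{2jt} - 1) / (2j))`.
At `t = log 2 / (2k)` every `2jt` lies in `[0, log 2]`, where `eˣ - 1 ≤ 2x` by convexity,
so the sum is at most `2t ∑_{j ∣ k} a(d,j)` and the exponent at most `-tα ∑_{j ∣ k} a(d,j)`;
finally `∑_{j ∣ k} a(d,j) ≥ a(d,k) ≥ (2d-1)^k`.
-/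

open MeasureTheory ProbabilityTheory

/-- The number `a(d,j)` of cyclically reduced words of length `j` on `2d` letters:
`(2d−1)^j − 1 + 2d` for even `j` and `(2d−1)^j + 1` for odd `j`. -/
def adk (d j : ℕ) : ℕ := if Even j then (2 * d - 1) ^ j - 1 + 2 * d else (2 * d - 1) ^ j + 1

namespace ProbabilityTheory

section Poisson

open Real
open scoped NNReal Nat

lemma hasSum_poissonMeasure_mul_exp (r : ℝ≥0) (s : ℝ) :
    HasSum (fun n : ℕ ↦ exp (-r) * r ^ n / n ! * exp (s * n)) (exp (r * (exp s - 1))) := by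
  have h := (NormedSpace.expSeries_div_hasSum_exp ((r : ℝ) * exp s)).mul_left (exp (-r))
  rw [← exp_eq_exp_ℝ, ← exp_add, neg_add_eq_sub, ← mul_sub_one] at h
  convert! h using 2 with n
  rw [mul_pow, ← exp_nat_mul, mul_comm s]
  ring

lemma integrable_exp_mul_poissonMeasure (r : ℝ≥0) (s : ℝ) :
    Integrable (fun n : ℕ ↦ exp (s * n)) (poissonMeasure r) := by
  refine integrable_poissonMeasure_iff.2 ?_
  simpa only [norm_of_nonneg (exp_nonneg _)] using (hasSum_poissonMeasure_mul_exp r s).summable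

lemma integral_exp_mul_poissonMeasure (r : ℝ≥0) (s : ℝ) :
    ∫ n : ℕ, exp (s * n) ∂poissonMeasure r = exp (r * (exp s - 1)) := by
  rw [integral_poissonMeasure]
  exact (hasSum_poissonMeasure_mul_exp r s).tsum_eq

variable {Ω : Type*} [MeasurableSpace Ω] {P : Measure Ω} {N : Ω → ℕ} {r : ℝ≥0}

lemma HasLaw.integrable_exp_mul_poissonMeasure (hN : HasLaw N (poissonMeasure r) P) (s : ℝ) :
    Integrable (fun ω ↦ exp (s * N ω)) P := by
  have h := ProbabilityTheory.integrable_exp_mul_poissonMeasure r s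
  rw [← hN.map_eq, integrable_map_measure (by fun_prop) hN.aemeasurable] at h
  exact h

lemma HasLaw.mgf_poissonMeasure (hN : HasLaw N (poissonMeasure r) P) (t : ℝ) :
    mgf (fun ω ↦ (N ω : ℝ)) P t = exp (r * (exp t - 1)) := by
  rw [mgf, ← integral_exp_mul_poissonMeasure]
  exact hN.integral_comp (f := fun n : ℕ ↦ exp (t * n)) (by fun_prop)

end Poisson

open Real in
lemma iIndepFun.measureReal_sum_mul_ge_le_of_hasLaw_poissonMeasure {ι Ω : Type*}
    [MeasurableSpace Ω] {P : Measure Ω} [IsFiniteMeasure P] {N : ι → Ω → ℕ}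
    (hmeas : ∀ i, Measurable (N i)) (hindep : iIndepFun N P) {s : Finset ι} {r : ι → NNReal}
    (hlaw : ∀ i ∈ s, HasLaw (N i) (poissonMeasure (r i)) P) (c : ι → ℝ) (a : ℝ) {t : ℝ}
    (ht : 0 ≤ t) :
    P.real {ω | a ≤ ∑ i ∈ s, c i * N i ω}
      ≤ exp (-t * a + ∑ i ∈ s, r i * (exp (c i * t) - 1)) := by
  set X : ι → Ω → ℝ := fun i ω ↦ c i * N i ω
  have hXmeas : ∀ i, Measurable (X i) := fun i ↦ by fun_prop
  have hXindep : iIndepFun X P := hindep.comp (fun i n ↦ c i * n) fun i ↦ measurable_from_top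
  have hXmgf : ∀ i ∈ s, mgf (X i) P t = exp (r i * (exp (c i * t) - 1)) := fun i hi ↦ by
    rw [mgf_const_mul, (hlaw i hi).mgf_poissonMeasure]
  have hXint : ∀ i ∈ s, Integrable (fun ω ↦ exp (t * X i ω)) P := fun i hi ↦ by
    simpa only [X, ← mul_assoc] using (hlaw i hi).integrable_exp_mul_poissonMeasure (t * c i)
  calc P.real {ω | a ≤ ∑ i ∈ s, c i * N i ω}
      = P.real {ω | a ≤ (∑ i ∈ s, X i) ω} := by simp only [X, Finset.sum_apply]
    _ ≤ exp (-t * a) * mgf (∑ i ∈ s, X i) P t :=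
      measure_ge_le_exp_mul_mgf a ht (hXindep.integrable_exp_mul_sum hXmeas hXint)
    _ = exp (-t * a + ∑ i ∈ s, r i * (exp (c i * t) - 1)) := by
      rw [hXindep.mgf_sum hXmeas, Finset.prod_congr rfl hXmgf, ← exp_sum, ← exp_add]

end ProbabilityTheory

lemma Real.exp_sub_one_le_two_mul {x : ℝ} (hx₀ : 0 ≤ x) (hx : x ≤ log 2) :
    exp x - 1 ≤ 2 * x := by
  -- convexity of `exp` on `[0, log 2]`: the chord has slope `1 / log 2 < 2`
  have hlog : 1 / 2 < log 2 := by linarith [log_two_gt_d9]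
  have hlog₀ : 0 < log 2 := by linarith
  have hchord := convexOn_exp.2 (Set.mem_univ 0) (Set.mem_univ (log 2))
    (sub_nonneg.2 ((div_le_one hlog₀).2 hx)) (div_nonneg hx₀ hlog₀.le) (sub_add_cancel 1 _)
  simp only [smul_eq_mul, mul_zero, zero_add, exp_zero, mul_one, exp_log two_pos,
    div_mul_cancel₀ x hlog₀.ne'] at hchord
  have : x / log 2 ≤ 2 * x := by
    rw [div_le_iff₀ hlog₀]; nlinarith
  linarith

lemma pow_le_adk {d : ℕ} (hd : 1 ≤ d) (k : ℕ) : (2 * d - 1) ^ k ≤ adk d k := by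
  unfold adk
  split_ifs <;> omega

lemma pow_le_sum_divisors_adk {d k : ℕ} (hd : 1 ≤ d) (hk : k ≠ 0) :
    ((2 * d : ℝ) - 1) ^ k ≤ ∑ j ∈ k.divisors, (adk d j : ℝ) := by
  have hcast : ((2 * d : ℝ) - 1) ^ k = ((2 * d - 1) ^ k : ℕ) := by
    rw [Nat.cast_pow, Nat.cast_sub (by omega)]
    push_cast
    ring
  rw [hcast]
  calc (((2 * d - 1) ^ k : ℕ) : ℝ) ≤ adk d k := by exact_mod_cast pow_le_adk hd k
    _ ≤ ∑ j ∈ k.divisors, (adk d j : ℝ) :=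
      Finset.single_le_sum (fun j _ ↦ Nat.cast_nonneg _) (Nat.mem_divisors_self k hk)

open Real in
lemma sum_div_mul_exp_sub_one_le {s : Finset ℕ} {a : ℕ → ℝ} (ha : ∀ j ∈ s, 0 ≤ a j)
    {t : ℝ} (ht : 0 ≤ t) (hs : ∀ j ∈ s, 2 * j * t ≤ log 2) :
    ∑ j ∈ s, a j / (2 * j) * (exp (2 * j * t) - 1) ≤ 2 * t * ∑ j ∈ s, a j := by
  rw [Finset.mul_sum]
  refine Finset.sum_le_sum fun j hj ↦ ?_
  rcases Nat.eq_zero_or_pos j with rfl | hj_pos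
  · simpa using mul_nonneg (mul_nonneg zero_le_two ht) (ha 0 hj)
  have h2j : (0 : ℝ) < 2 * j := by positivity
  calc a j / (2 * j) * (exp (2 * j * t) - 1)
      ≤ a j / (2 * j) * (2 * (2 * j * t)) := by
        gcongr
        · exact div_nonneg (ha j hj) h2j.le
        · exact exp_sub_one_le_two_mul (by positivity) (hs j hj)
    _ = 2 * t * a j := by field_simp

/-- Let `C_1, C_2, …` be independent Poisson random variables with
`C_j` of mean `a(d,j)/(2j)`, and `N_k = ∑_{j|k} 2j C_j`. If `α > 0` and
`a_k = (α+2)·∑_{j|k} a(d,j)`, then `P[N_k > a_k] ≤ 2^{−α(2d−1)^k/(2k)}`. -/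
theorem CNBW_limit_tail_bound {Ω : Type*} [MeasurableSpace Ω] (μ : Measure Ω)
    [IsProbabilityMeasure μ] (d : ℕ) (hd : 2 ≤ d) (C : ℕ → Ω → ℕ)
    (hmeas : ∀ j, Measurable (C j))
    (hindep : iIndepFun C μ)
    (hpoisson : ∀ j, 1 ≤ j →
      Measure.map (C j) μ = poissonMeasure ((adk d j : NNReal) / (2 * j)))
    (k : ℕ) (hk : 1 ≤ k) (α : ℝ) (hα : 0 < α) :
    (μ {ω | (α + 2) * ∑ j ∈ k.divisors, (adk d j : ℝ)
        < ∑ j ∈ k.divisors, (2 * j * C j ω : ℝ)}).toReal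
      ≤ (2 : ℝ) ^ (-(α * ((2 * d : ℝ) - 1) ^ k / (2 * k))) := by
  open Real in
  set A := ∑ j ∈ k.divisors, (adk d j : ℝ)
  set t := log 2 / (2 * k)
  have ht : 0 ≤ t := by positivity
  have hlaw : ∀ j ∈ k.divisors, HasLaw (C j) (poissonMeasure ((adk d j : NNReal) / (2 * j))) μ :=
    fun j hj ↦ ⟨(hmeas j).aemeasurable, hpoisson j (Nat.pos_of_mem_divisors hj)⟩
  have hexponent : ∑ j ∈ k.divisors, (((adk d j : NNReal) / (2 * j) : NNReal) : ℝ)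
      * (exp (2 * j * t) - 1) ≤ 2 * t * A := by
    push_cast
    refine sum_div_mul_exp_sub_one_le (fun _ _ ↦ Nat.cast_nonneg _) ht fun j hj ↦ ?_
    have hjk : (j : ℝ) ≤ k := by exact_mod_cast Nat.divisor_le hj
    calc 2 * j * t = j / k * log 2 := by simp only [t]; field_simp
      _ ≤ log 2 :=
        mul_le_of_le_one_left (log_nonneg one_le_two) (div_le_one_of_le₀ hjk (by positivity))
  have hA : ((2 * d : ℝ) - 1) ^ k ≤ A := pow_le_sum_divisors_adk (by omega) (by omega)
  calc (μ {ω | (α + 2) * A < ∑ j ∈ k.divisors, (2 * j * C j ω : ℝ)}).toReal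
      ≤ μ.real {ω | (α + 2) * A ≤ ∑ j ∈ k.divisors, (2 * j : ℝ) * C j ω} :=
        measureReal_mono (Set.ofPred_subset_ofPred.2 fun _ ↦ le_of_lt)
    _ ≤ exp (-t * ((α + 2) * A) + 2 * t * A) :=
        (hindep.measureReal_sum_mul_ge_le_of_hasLaw_poissonMeasure hmeas hlaw _ _ ht).trans
          (exp_le_exp.2 (by linarith))
    _ ≤ exp (-t * (α * ((2 * d : ℝ) - 1) ^ k)) := by
        gcongr exp ?_
        nlinarith [mul_nonneg (mul_nonneg ht hα.le) (sub_nonneg.2 hA)]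
    _ = (2 : ℝ) ^ (-(α * ((2 * d : ℝ) - 1) ^ k / (2 * k))) := by
        rw [rpow_def_of_pos two_pos]
        congr 1
        simp only [t]
        ring
end

section
/- Let T_k denote the Chebyshev polynomials of the first kind and U_k those of the second kind. For d ≥ 1 define p_k(x) = U_k(x/2) − (2d−1)^{-1} U_{k−2}(x/2) for k ≥ 2. Define Γ_{2k}(x) = 2T_{2k}(x/2) + (2d−2)/(2d−1)^k for k ≥ 1 and Γ_{2k+1}(x) = 2T_{2k+1}(x/2) for k ≥ 0. Then Γ_{2k}(x) = p_{2k}(x) − (2d−2)·∑_{i=1}^{k−1} p_{2k−2i}(x)/(2d−1)^i and Γ_{2k+1}(x) = p_{2k+1}(x) − (2d−2)·∑_{i=1}^{k} p_{2k+1−2i}(x)/(2d−1)^i, where p_1(x) = U_1(x/2) and p_2(x) = U_2(x/2) − (2d−1)^{-1}. -/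
open Polynomial Chebyshev

private lemma tele_sum (f : ℕ → ℝ) : ∀ n : ℕ,
    ∑ i ∈ Finset.Icc 1 n, (f i - f (i + 1)) = f 1 - f (n + 1) := by
  intro n
  induction n with
  | zero => simp
  | succ n ih =>
    rw [Finset.sum_Icc_succ_top (by omega), ih]; ring

private lemma two_T_eval (y : ℝ) (n : ℤ) :
    2 * (Polynomial.Chebyshev.T ℝ n).eval y
      = (Polynomial.Chebyshev.U ℝ n).eval y - (Polynomial.Chebyshev.U ℝ (n - 2)).eval y := by
  have h : (2 : ℝ[X]) * Polynomial.Chebyshev.T ℝ n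
      = Polynomial.Chebyshev.U ℝ n - Polynomial.Chebyshev.U ℝ (n - 2) := by
    linear_combination (2 : ℝ[X]) * Polynomial.Chebyshev.T_eq_U_sub_X_mul_U ℝ n
      + Polynomial.Chebyshev.U_sub_two ℝ n
  have := congrArg (Polynomial.eval y) h
  simpa using this

/-- With `T_k`, `U_k` the Chebyshev polynomials of the first and second
kind, `p_j(x) = U_j(x/2) − (2d−1)⁻¹ U_{j−2}(x/2)` (so that `p_1(x) = U_1(x/2)` since
`U_{−1} = 0`, and `p_2(x) = U_2(x/2) − (2d−1)⁻¹`), and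
`Γ_{2k}(x) = 2T_{2k}(x/2) + (2d−2)/(2d−1)^k`, `Γ_{2k+1}(x) = 2T_{2k+1}(x/2)`,
one has `Γ_{2k}(x) = p_{2k}(x) − (2d−2)∑_{i=1}^{k−1} p_{2k−2i}(x)/(2d−1)^i` and
`Γ_{2k+1}(x) = p_{2k+1}(x) − (2d−2)∑_{i=1}^{k} p_{2k+1−2i}(x)/(2d−1)^i`. -/
theorem gamma_eq_p_sum (d : ℕ) (hd : 2 ≤ d) (x : ℝ) (p : ℤ → ℝ)
    (hp : ∀ j : ℤ, p j = (Polynomial.Chebyshev.U ℝ j).eval (x / 2)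
      - ((2 * d : ℝ) - 1)⁻¹ * (Polynomial.Chebyshev.U ℝ (j - 2)).eval (x / 2)) :
    (∀ k : ℕ, 1 ≤ k →
      2 * (Polynomial.Chebyshev.T ℝ (2 * k)).eval (x / 2)
          + (2 * (d : ℝ) - 2) / ((2 * d : ℝ) - 1) ^ k
        = p (2 * k) - (2 * (d : ℝ) - 2) *
            ∑ i ∈ Finset.Icc 1 (k - 1), p (2 * k - 2 * i) / ((2 * d : ℝ) - 1) ^ i) ∧
    (∀ k : ℕ,
      2 * (Polynomial.Chebyshev.T ℝ (2 * k + 1)).eval (x / 2)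
        = p (2 * k + 1) - (2 * (d : ℝ) - 2) *
            ∑ i ∈ Finset.Icc 1 k, p (2 * k + 1 - 2 * i) / ((2 * d : ℝ) - 1) ^ i) := by
  set y := x / 2
  set c : ℝ := ((2 * d : ℝ) - 1)⁻¹ with hc
  have hd1 : (1 : ℝ) ≤ (d : ℝ) := by exact_mod_cast Nat.one_le_of_lt hd
  have hne : (2 * d : ℝ) - 1 ≠ 0 := by nlinarith
  have hcinv : c * ((2 * d : ℝ) - 1) = 1 := inv_mul_cancel₀ hne
  set u : ℤ → ℝ := fun j => (Polynomial.Chebyshev.U ℝ j).eval y with hu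
  have key : ∀ m : ℤ, ∀ n : ℕ,
      ∑ i ∈ Finset.Icc 1 n, p (m - 2 * i) / ((2 * d : ℝ) - 1) ^ i
        = c * u (m - 2) - c ^ (n + 1) * u (m - 2 * ((n : ℤ) + 1)) := by
    intro m n
    have htel := tele_sum (fun i => c ^ i * u (m - 2 * i)) n
    simp only [pow_one] at htel
    push_cast at htel
    rw [← htel]
    apply Finset.sum_congr rfl
    intro i _
    rw [hp]
    rw [show m - 2 * (i : ℤ) - 2 = m - 2 * ((i : ℤ) + 1) by ring]
    rw [div_eq_mul_inv, ← inv_pow]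
    simp only [hu, hc]
    ring
  constructor
  · intro k hk
    have hsum := key (2 * k) (k - 1)
    have hk1 : ((k - 1 : ℕ) : ℤ) + 1 = (k : ℤ) := by omega
    rw [hk1] at hsum
    have h0 : u (2 * (k : ℤ) - 2 * (k : ℤ)) = 1 := by
      simp [hu, Polynomial.Chebyshev.U_zero]
    rw [hsum, h0, mul_one]
    have h2T := two_T_eval y (2 * (k : ℤ))
    rw [hp (2 * (k : ℤ))]
    rw [div_eq_mul_inv, ← inv_pow, ← hc]
    rw [show (k - 1) + 1 = k from by omega]
    simp only [hu]
    linear_combination h2T + (Polynomial.Chebyshev.U ℝ (2 * (k : ℤ) - 2)).eval y * hcinv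
  · intro k
    have hsum := key (2 * k + 1) k
    have hneg : u (2 * (k : ℤ) + 1 - 2 * ((k : ℤ) + 1)) = 0 := by
      rw [show 2 * (k : ℤ) + 1 - 2 * ((k : ℤ) + 1) = -1 by ring]
      simp [hu, Polynomial.Chebyshev.U_neg_one]
    rw [hsum, hneg, mul_zero, sub_zero]
    have h2T := two_T_eval y (2 * (k : ℤ) + 1)
    rw [hp (2 * (k : ℤ) + 1)]
    simp only [hu]
    linear_combination h2T + (Polynomial.Chebyshev.U ℝ (2 * (k : ℤ) + 1 - 2)).eval y * hcinv
end

section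
/- Fix d ≥ 2. For real x in the interval [2, 2d/√(2d−1)], the Chebyshev polynomial of the first kind satisfies |T_n(x/2)| ≤ (1 + (2d−1)^{n/2})/2 for every n ≥ 0. -/
lemma T_real_cosh (t : ℝ) (n : ℤ) :
    (Polynomial.Chebyshev.T ℝ n).eval (Real.cosh t) = Real.cosh (n * t) := by
  have h := Polynomial.Chebyshev.T_complex_cos ((t : ℂ) * Complex.I) n
  rw [Complex.cos_mul_I] at h
  have h2 : (n : ℂ) * ((t : ℂ) * Complex.I) = ((n * t : ℝ) : ℂ) * Complex.I := by
    push_cast; ring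
  rw [h2, Complex.cos_mul_I] at h
  exact_mod_cast h

/-- Fix `d ≥ 2`. For real `x ∈ [2, 2d/√(2d−1)]` and every `n ≥ 0`,
the Chebyshev polynomial of the first kind satisfies
`|T_n(x/2)| ≤ (1 + (2d−1)^{n/2})/2`. -/
theorem chebyshev_T_bound (d : ℕ) (hd : 2 ≤ d) (x : ℝ) (hx2 : 2 ≤ x)
    (hxd : x ≤ 2 * d / Real.sqrt (2 * d - 1)) (n : ℕ) :
    |(Polynomial.Chebyshev.T ℝ n).eval (x / 2)|
      ≤ (1 + ((2 * d : ℝ) - 1) ^ ((n : ℝ) / 2)) / 2 := by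
  have hd' : (2 : ℝ) ≤ (d : ℝ) := by exact_mod_cast hd
  set y : ℝ := x / 2 with hy
  have hy1 : 1 ≤ y := by rw [hy]; linarith
  have hmpos : (0 : ℝ) < 2 * d - 1 := by linarith
  have hs : 0 < Real.sqrt (2 * d - 1) := Real.sqrt_pos.mpr hmpos
  have hssq : Real.sqrt (2 * d - 1) ^ 2 = 2 * d - 1 := Real.sq_sqrt hmpos.le
  set a : ℝ := y + Real.sqrt (y ^ 2 - 1) with ha
  have hsqnn : 0 ≤ y ^ 2 - 1 := by nlinarith
  have hsnn := Real.sqrt_nonneg (y ^ 2 - 1)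
  have ha1 : 1 ≤ a := by rw [ha]; linarith
  have hapos : 0 < a := by linarith
  -- y ≤ d / √(2d-1)
  have hyd : y ≤ (d : ℝ) / Real.sqrt (2 * d - 1) := by
    rw [hy, div_le_div_iff₀ (by norm_num) hs]
    rw [le_div_iff₀ hs] at hxd
    linarith
  -- √(y²-1) ≤ (d-1)/√(2d-1)
  have hy2 : y ^ 2 ≤ (d : ℝ) ^ 2 / (2 * d - 1) := by
    have h1 : y ^ 2 ≤ ((d : ℝ) / Real.sqrt (2 * d - 1)) ^ 2 := by
      apply sq_le_sq' <;> nlinarith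
    calc y ^ 2 ≤ ((d : ℝ) / Real.sqrt (2 * d - 1)) ^ 2 := h1
      _ = (d : ℝ) ^ 2 / (2 * d - 1) := by rw [div_pow, hssq]
  have hsqle : Real.sqrt (y ^ 2 - 1) ≤ ((d : ℝ) - 1) / Real.sqrt (2 * d - 1) := by
    have h1 : y ^ 2 - 1 ≤ ((d : ℝ) - 1) ^ 2 / (2 * d - 1) := by
      rw [le_div_iff₀ hmpos] at hy2 ⊢
      nlinarith [hy2, hmpos]
    calc Real.sqrt (y ^ 2 - 1) ≤ Real.sqrt (((d : ℝ) - 1) ^ 2 / (2 * d - 1)) :=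
          Real.sqrt_le_sqrt h1
      _ = ((d : ℝ) - 1) / Real.sqrt (2 * d - 1) := by
          rw [Real.sqrt_div (by positivity), Real.sqrt_sq (by linarith)]
  have hale : a ≤ Real.sqrt (2 * d - 1) := by
    have : a ≤ (2 * d - 1) / Real.sqrt (2 * d - 1) := by
      rw [ha]
      have : (d : ℝ) / Real.sqrt (2 * d - 1) + ((d : ℝ) - 1) / Real.sqrt (2 * d - 1)
          = (2 * d - 1) / Real.sqrt (2 * d - 1) := by ring
      linarith [hyd, hsqle]
    calc a ≤ (2 * d - 1) / Real.sqrt (2 * d - 1) := this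
      _ = Real.sqrt (2 * d - 1) := Real.div_sqrt
  -- t = log a, cosh t = y
  set t : ℝ := Real.log a with ht
  have htnn : 0 ≤ t := Real.log_nonneg ha1
  have hainv : a⁻¹ = y - Real.sqrt (y ^ 2 - 1) := by
    apply inv_eq_of_mul_eq_one_right
    rw [ha]; nlinarith [Real.sq_sqrt hsqnn]
  have hcosh : Real.cosh t = y := by
    rw [Real.cosh_eq, ht, Real.exp_log hapos, ← Real.log_inv, Real.exp_log (by positivity),
      hainv, ha]
    ring
  have hT : (Polynomial.Chebyshev.T ℝ n).eval y = Real.cosh (n * t) := by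
    rw [← hcosh, T_real_cosh t (n : ℤ)]
    norm_num
  rw [hT, abs_of_nonneg ((Real.cosh_pos _).le), Real.cosh_eq]
  have hexpneg : Real.exp (-((n : ℝ) * t)) ≤ 1 := by
    apply Real.exp_le_one_iff.mpr
    simp only [neg_nonpos]
    positivity
  have hexp : Real.exp ((n : ℝ) * t) ≤ ((2 * d : ℝ) - 1) ^ ((n : ℝ) / 2) := by
    have h1 : Real.exp ((n : ℝ) * t) = a ^ n := by
      rw [Real.exp_nat_mul, ht, Real.exp_log hapos]
    have h2 : a ^ n ≤ Real.sqrt (2 * d - 1) ^ n :=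
      pow_le_pow_left₀ hapos.le hale n
    have h3 : Real.sqrt (2 * d - 1) ^ n = ((2 * d : ℝ) - 1) ^ ((n : ℝ) / 2) := by
      rw [Real.sqrt_eq_rpow, ← Real.rpow_natCast (((2 * d : ℝ) - 1) ^ ((1 : ℝ) / 2)) n,
        ← Real.rpow_mul hmpos.le]
      ring_nf
    rw [h1]; linarith [h2, h3.le, h3.ge]
  linarith
end
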